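/- Let d ≥ 1 be an integer and η ∈ [0, 1/2], and let X be a binomial random variable with parameters d and η, i.e. Pr(X = j) = C(d,j) η^j (1-η)^{d-j}. Then Pr(X > d/2) + (1/2)·Pr(X = d/2) ≤ η. -/

import Mathlib

open Finset

noncomputable def bmtW (d j : ℕ) : ℝ :=
  if d < 2*j then 1 else if 2*j = d then 1/2 else 0

noncomputable def bmtF (d : ℕ) (x : ℝ) : ℝ :=
  ∑ j ∈ Finset.range (d+1), bmtW d j * ((d.choose j : ℝ) * x^j * (1-x)^(d-j))

noncomputable def bmtQ (d : ℕ) (x : ℝ) (i : ℕ) : ℝ :=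
  ((d-1).choose i : ℝ) * x^i * (1-x)^(d-1-i)

lemma bmtW_add (d j : ℕ) (hj : j ≤ d) : bmtW d j + bmtW d (d - j) = 1 := by
  unfold bmtW
  rcases lt_trichotomy (2*j) d with h | h | h
  · rw [if_neg (by omega), if_neg (by omega), if_pos (by omega)]; ring
  · rw [if_neg (by omega), if_pos (by omega), if_neg (by omega), if_pos (by omega)]; ring
  · rw [if_pos (by omega), if_neg (by omega), if_neg (by omega)]; ring

lemma bmt_lhs_eq (d : ℕ) (η : ℝ) :
    (∑ j ∈ (Finset.range (d + 1)).filter (fun j => d < 2 * j),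
        (d.choose j : ℝ) * η ^ j * (1 - η) ^ (d - j)) +
      (1 / 2) * (∑ j ∈ (Finset.range (d + 1)).filter (fun j => 2 * j = d),
        (d.choose j : ℝ) * η ^ j * (1 - η) ^ (d - j)) = bmtF d η := by
  unfold bmtF bmtW
  rw [Finset.sum_filter, Finset.sum_filter, Finset.mul_sum, ← Finset.sum_add_distrib]
  refine Finset.sum_congr rfl fun j _ => ?_
  by_cases h1 : d < 2*j
  · rw [if_pos h1, if_pos h1, if_neg (by omega)]; ring
  · rw [if_neg h1, if_neg h1]
    by_cases h2 : 2*j = d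
    · rw [if_pos h2, if_pos h2]; ring
    · rw [if_neg h2, if_neg h2]; ring

lemma bmtF_hasDeriv (d : ℕ) (x : ℝ) :
    HasDerivAt (bmtF d) (∑ j ∈ Finset.range (d+1), bmtW d j *
      ((d.choose j : ℝ) * ((j:ℝ) * x^(j-1)) * (1-x)^(d-j)
        - (d.choose j : ℝ) * x^j * (((d-j : ℕ):ℝ) * (1-x)^(d-j-1)))) x := by
  unfold bmtF
  apply HasDerivAt.fun_sum
  intro j _
  have h1 : HasDerivAt (fun x : ℝ => x^j) ((j:ℝ) * x^(j-1)) x := hasDerivAt_pow j x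
  have h2 : HasDerivAt (fun x : ℝ => (1-x)^(d-j))
      (((d-j : ℕ):ℝ) * (1-x)^(d-j-1) * (0-1)) x :=
    (hasDerivAt_pow (d-j) (1-x)).comp x ((hasDerivAt_const x (1:ℝ)).sub (hasDerivAt_id x))
  have h3 := ((h1.const_mul ((d.choose j : ℝ))).mul h2)
  have := h3.const_mul (bmtW d j)
  exact this.congr_deriv (by ring)

lemma bmt_deriv_eq (d : ℕ) (hd : 1 ≤ d) (x : ℝ) :
    (∑ j ∈ Finset.range (d+1), bmtW d j *
      ((d.choose j : ℝ) * ((j:ℝ) * x^(j-1)) * (1-x)^(d-j)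
        - (d.choose j : ℝ) * x^j * (((d-j : ℕ):ℝ) * (1-x)^(d-j-1))))
    = ∑ i ∈ Finset.range d, (bmtW d (i+1) - bmtW d i) * ((d:ℝ) * bmtQ d x i) := by
  have key : ∀ j ∈ Finset.range (d+1), bmtW d j *
      ((d.choose j : ℝ) * ((j:ℝ) * x^(j-1)) * (1-x)^(d-j)
        - (d.choose j : ℝ) * x^j * (((d-j : ℕ):ℝ) * (1-x)^(d-j-1)))
      = bmtW d j * ((d.choose j : ℝ) * ((j:ℝ) * x^(j-1)) * (1-x)^(d-j))
        - bmtW d j * ((d.choose j : ℝ) * x^j * (((d-j : ℕ):ℝ) * (1-x)^(d-j-1))) := by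
    intro j _; ring
  rw [Finset.sum_congr rfl key, Finset.sum_sub_distrib]
  have hA : (∑ j ∈ Finset.range (d+1),
      bmtW d j * ((d.choose j : ℝ) * ((j:ℝ) * x^(j-1)) * (1-x)^(d-j)))
      = ∑ i ∈ Finset.range d, bmtW d (i+1) * ((d:ℝ) * bmtQ d x i) := by
    rw [Finset.sum_range_succ']
    simp only [Nat.cast_zero, zero_mul, mul_zero, add_zero]
    refine Finset.sum_congr rfl fun i hi => ?_
    have hi' : i < d := Finset.mem_range.mp hi
    have hnat : d.choose (i+1) * (i+1) = d * (d-1).choose i := by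
      have h := Nat.add_one_mul_choose_eq (d-1) i
      rw [Nat.sub_add_cancel hd] at h
      exact h.symm
    have hcast : ((d.choose (i+1) : ℝ)) * ((i:ℝ)+1) = (d:ℝ) * ((d-1).choose i : ℝ) := by
      have := congrArg (Nat.cast : ℕ → ℝ) hnat
      push_cast at this
      linarith [this]
    unfold bmtQ
    have he : d - (i+1) = d - 1 - i := by omega
    rw [he, Nat.add_sub_cancel]
    push_cast
    linear_combination bmtW d (i+1) * x^i * (1-x)^(d-1-i) * hcast
  have hB : (∑ j ∈ Finset.range (d+1),
      bmtW d j * ((d.choose j : ℝ) * x^j * (((d-j : ℕ):ℝ) * (1-x)^(d-j-1))))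
      = ∑ i ∈ Finset.range d, bmtW d i * ((d:ℝ) * bmtQ d x i) := by
    rw [Finset.sum_range_succ]
    simp only [Nat.sub_self, Nat.cast_zero, zero_mul, mul_zero, add_zero]
    refine Finset.sum_congr rfl fun i hi => ?_
    have hi' : i < d := Finset.mem_range.mp hi
    have hnat : d.choose i * (d-i) = d * (d-1).choose i := by
      have h1 := Nat.choose_succ_right_eq d i
      have h2 := Nat.add_one_mul_choose_eq (d-1) i
      rw [Nat.sub_add_cancel hd] at h2
      omega
    have hcast : ((d.choose i : ℝ)) * (((d-i : ℕ)):ℝ) = (d:ℝ) * ((d-1).choose i : ℝ) := by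
      have := congrArg (Nat.cast : ℕ → ℝ) hnat
      push_cast at this
      linarith [this]
    unfold bmtQ
    have he : d - i - 1 = d - 1 - i := by omega
    rw [he]
    push_cast [Nat.cast_sub hi'.le] at hcast ⊢
    linear_combination bmtW d i * x^i * (1-x)^(d-1-i) * hcast
  rw [hA, hB, ← Finset.sum_sub_distrib]
  refine Finset.sum_congr rfl fun i _ => ?_
  ring

noncomputable def bmtC (d : ℕ) : ℝ :=
  if d % 2 = 1 then (d:ℝ) * ((d-1).choose ((d-1)/2) : ℕ)
  else (d:ℝ)/2 * ((d-1).choose ((d-1)/2) : ℕ)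

lemma bmtC_nonneg (d : ℕ) : 0 ≤ bmtC d := by
  unfold bmtC; split_ifs <;> positivity

lemma bmt_eval (d : ℕ) (hd : 1 ≤ d) (x : ℝ) :
    ∑ i ∈ Finset.range d, (bmtW d (i+1) - bmtW d i) * ((d:ℝ) * bmtQ d x i)
      = bmtC d * (x*(1-x))^((d-1)/2) := by
  rcases Nat.even_or_odd d with ⟨k, hk⟩ | ⟨m, hm⟩
  · -- d even, d = 2k = 2m+2
    obtain ⟨m, hm⟩ : ∃ m, d = 2*m + 2 := ⟨k - 1, by omega⟩
    have hmm : m + 1 < d := by omega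
    have hsub : ({m, m+1} : Finset ℕ) ⊆ Finset.range d := by
      intro i hi; simp only [Finset.mem_insert, Finset.mem_singleton] at hi
      rcases hi with rfl | rfl <;> simp [Finset.mem_range] <;> omega
    rw [← Finset.sum_subset hsub (by
      intro i _ hi
      simp only [Finset.mem_insert, Finset.mem_singleton, not_or] at hi
      have : bmtW d (i+1) - bmtW d i = 0 := by
        unfold bmtW; split_ifs <;> first | omega | ring
      rw [this, zero_mul])]
    rw [Finset.sum_pair (by omega : m ≠ m + 1)]
    have hw1 : bmtW d (m+1) - bmtW d m = 1/2 := by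
      unfold bmtW; rw [if_neg (by omega), if_pos (by omega), if_neg (by omega), if_neg (by omega)]; norm_num
    have hw2 : bmtW d (m+1+1) - bmtW d (m+1) = 1/2 := by
      unfold bmtW; rw [if_pos (by omega), if_neg (by omega), if_pos (by omega)]; norm_num
    have hq1 : bmtQ d x m = ((d-1).choose m : ℕ) * x^m * (1-x)^(m+1) := by
      unfold bmtQ; congr 2; omega
    have hq2 : bmtQ d x (m+1) = ((d-1).choose m : ℕ) * x^(m+1) * (1-x)^m := by
      unfold bmtQ
      have h1 : d - 1 - (m+1) = m := by omega
      have h2 : (d-1).choose (m+1) = (d-1).choose m := by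
        have hd1 : d - 1 = 2*m+1 := by omega
        have h := Nat.choose_symm (show m+1 ≤ 2*m+1 by omega)
        rw [show 2*m+1 - (m+1) = m by omega] at h
        rw [hd1]; exact h.symm
      rw [h1, h2]
    have hc : bmtC d = (d:ℝ)/2 * ((d-1).choose ((d-1)/2) : ℕ) := by
      unfold bmtC; rw [if_neg (by omega)]
    have hm2 : (d-1)/2 = m := by omega
    rw [hw1, hw2, hq1, hq2, hc, hm2, mul_pow]
    ring
  · -- d odd, d = 2m+1
    have hmem : m ∈ Finset.range d := Finset.mem_range.mpr (by omega)
    rw [Finset.sum_eq_single_of_mem m hmem (by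
      intro i _ hi
      have : bmtW d (i+1) - bmtW d i = 0 := by
        unfold bmtW; split_ifs <;> first | omega | ring
      rw [this, zero_mul])]
    have hw : bmtW d (m+1) - bmtW d m = 1 := by
      unfold bmtW; rw [if_pos (by omega), if_neg (by omega), if_neg (by omega)]; norm_num
    have hq : bmtQ d x m = ((d-1).choose m : ℕ) * x^m * (1-x)^m := by
      unfold bmtQ; congr 2; omega
    have hc : bmtC d = (d:ℝ) * ((d-1).choose ((d-1)/2) : ℕ) := by
      unfold bmtC; rw [if_pos (by omega)]
    have hm2 : (d-1)/2 = m := by omega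
    rw [hw, hq, hc, hm2, mul_pow]
    ring

lemma bmtF_zero (d : ℕ) (hd : 1 ≤ d) : bmtF d 0 = 0 := by
  unfold bmtF
  apply Finset.sum_eq_zero
  intro j _
  rcases Nat.eq_zero_or_pos j with rfl | hj
  · have : bmtW d 0 = 0 := by unfold bmtW; rw [if_neg (by omega), if_neg (by omega)]
    rw [this, zero_mul]
  · rw [zero_pow (by omega)]; ring

lemma bmtF_half (d : ℕ) (hd : 1 ≤ d) : bmtF d (1/2 : ℝ) = 1/2 := by
  have hhalf : (1 : ℝ) - 1/2 = 1/2 := by norm_num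
  have hF : bmtF d (1/2 : ℝ) = (1/2 : ℝ)^d * ∑ j ∈ Finset.range (d+1), bmtW d j * (d.choose j : ℝ) := by
    unfold bmtF
    rw [Finset.mul_sum]
    refine Finset.sum_congr rfl fun j hj => ?_
    have hjd : j ≤ d := by have := Finset.mem_range.mp hj; omega
    rw [hhalf]
    rw [show bmtW d j * ((d.choose j:ℝ) * (1/2:ℝ)^j * (1/2:ℝ)^(d-j))
        = ((1/2:ℝ)^j * (1/2:ℝ)^(d-j)) * (bmtW d j * (d.choose j:ℝ)) by ring]
    rw [← pow_add, Nat.add_sub_cancel' hjd]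
  set S := ∑ j ∈ Finset.range (d+1), bmtW d j * (d.choose j : ℝ) with hS
  have hrefl : S = ∑ j ∈ Finset.range (d+1), bmtW d (d - j) * (d.choose j : ℝ) := by
    rw [hS]
    rw [← Finset.sum_range_reflect (fun j => bmtW d j * (d.choose j : ℝ)) (d+1)]
    refine Finset.sum_congr rfl fun j hj => ?_
    have hjd : j ≤ d := by have := Finset.mem_range.mp hj; omega
    have h1 : d + 1 - 1 - j = d - j := by omega
    rw [h1, Nat.choose_symm hjd]
  have h2S : S + S = 2^d := by
    nth_rewrite 2 [hrefl]
    rw [← Finset.sum_add_distrib]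
    have : ∀ j ∈ Finset.range (d+1),
        bmtW d j * (d.choose j : ℝ) + bmtW d (d - j) * (d.choose j : ℝ) = (d.choose j : ℝ) := by
      intro j hj
      have hjd : j ≤ d := by have := Finset.mem_range.mp hj; omega
      rw [← add_mul, bmtW_add d j hjd, one_mul]
    rw [Finset.sum_congr rfl this]
    rw [← Nat.cast_sum]
    rw [Nat.sum_range_choose]
    push_cast; ring
  have hS2 : S = 2^d / 2 := by linarith
  rw [hF, hS2, div_pow, one_pow]
  field_simp

theorem binomial_majority_tail_le (d : ℕ) (hd : 1 ≤ d) (η : ℝ)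
    (hη : η ∈ Set.Icc (0 : ℝ) (1 / 2)) :
    (∑ j ∈ (Finset.range (d + 1)).filter (fun j => d < 2 * j),
        (d.choose j : ℝ) * η ^ j * (1 - η) ^ (d - j)) +
      (1 / 2) * (∑ j ∈ (Finset.range (d + 1)).filter (fun j => 2 * j = d),
        (d.choose j : ℝ) * η ^ j * (1 - η) ^ (d - j)) ≤ η := by
  rw [bmt_lhs_eq]
  set m := (d-1)/2 with hm
  have hderiv : ∀ x : ℝ, HasDerivAt (bmtF d) (bmtC d * (x*(1-x))^m) x := by
    intro x
    have h := bmtF_hasDeriv d x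
    rwa [bmt_deriv_eq d hd x, bmt_eval d hd x] at h
  set G : ℝ → ℝ := fun x => bmtF d x - x with hGdef
  have hG : ∀ x : ℝ, HasDerivAt G (bmtC d * (x*(1-x))^m - 1) x := by
    intro x
    exact (hderiv x).sub (hasDerivAt_id x)
  have hconv : ConvexOn ℝ (Set.Icc (0:ℝ) (1/2)) G := by
    apply MonotoneOn.convexOn_of_deriv (convex_Icc _ _)
    · exact fun x _ => ((hG x).differentiableAt).continuousAt.continuousWithinAt
    · exact fun x _ => ((hG x).differentiableAt).differentiableWithinAt
    · rw [interior_Icc]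
      intro a ha b hb hab
      rw [(hG a).deriv, (hG b).deriv]
      have h1 : 0 ≤ a * (1-a) := by nlinarith [ha.1, ha.2]
      have h2 : a*(1-a) ≤ b*(1-b) := by nlinarith [ha.1, ha.2, hb.1, hb.2]
      have h3 := mul_le_mul_of_nonneg_left (pow_le_pow_left₀ h1 h2 m) (bmtC_nonneg d)
      linarith
  have hseg : η ∈ segment ℝ (0:ℝ) (1/2) := by
    rw [segment_eq_Icc (by norm_num : (0:ℝ) ≤ 1/2)]
    exact hη
  have := hconv.le_on_segment (Set.left_mem_Icc.mpr (by norm_num))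
    (Set.right_mem_Icc.mpr (by norm_num)) hseg
  have hG0 : G 0 = 0 := by simp [hGdef, bmtF_zero d hd]
  have hGh : G (1/2) = 0 := by
    have h5 : bmtF d (1/2 : ℝ) - 1/2 = 0 := by rw [bmtF_half d hd]; norm_num
    exact h5
  rw [hG0, hGh, max_self] at this
  have : bmtF d η - η ≤ 0 := this
  linarith
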